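/- Assume C is semiprime. For every prime element p of C, O(p) = ⨅{q ∈ Spec(C) | q ≤ p}. -/

import Mathlib

/-! If `a` is compact and `a⊥ ≰ q` for a prime `q`, some `c ≰ q` has `[a,c] = ⊥ ≤ q`, so
`a ≤ q`; hence `O(p)` lies below every prime `q ≤ p`. Conversely, let `a` be compact with
`a⊥ ≤ p`. The commutators `[a,t]` with `t` compact and `t ≰ p` form a multiplicative system
up to radicals (`[a,[t₁,t₂]] ≤ ρ([[a,t₁],[a,t₂]])`), and by semiprimeness none of them lies
below `ρ(⊥) = ⊥`. An element maximal (by Zorn) among those avoiding them is a prime `q`; it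
lies below `p` because `[a,t] ≤ t`, and misses `a = [a,⊤]`. -/


open CompleteLattice

/-- A complete lattice equipped with a commutator operation, axiomatizing the congruence
lattice of an algebra in a semidegenerate congruence-modular variety whose compact
congruences are closed under the commutator. -/
class CommutatorLattice (C : Type*) [CompleteLattice C] where
  comm : C → C → C
  comm_comm : ∀ a b : C, comm a b = comm b a
  comm_sSup : ∀ (s : Set C) (b : C), comm (sSup s) b = ⨆ a ∈ s, comm a b
  comm_le_inf : ∀ a b : C, comm a b ≤ a ⊓ b
  comm_top : ∀ a : C, comm a ⊤ = a
  compactlyGenerated : ∀ x : C,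
    ∃ s : Set C, (∀ a ∈ s, IsCompactElement a) ∧ sSup s = x
  top_isCompact : IsCompactElement (⊤ : C)
  comm_isCompact : ∀ a b : C, IsCompactElement a → IsCompactElement b →
    IsCompactElement (comm a b)

namespace CommutatorLattice

variable {C : Type*} [CompleteLattice C] [CommutatorLattice C]

/-- The residuation `a → b := ⨆ {c | [a,c] ≤ b}`. -/
def resid (a b : C) : C := sSup {c : C | comm a c ≤ b}

/-- The annihilator `a⊥ := a → ⊥`. -/
def ann (a : C) : C := resid a ⊥

/-- Iterated commutator: `cpow a n = [a,a]^n`, with the convention `[a,a]^0 = a`.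
Note that `[a,b]^n` for `n ≥ 1` equals `cpow (comm a b) (n-1)`. -/
def cpow (a : C) : ℕ → C
  | 0 => a
  | n + 1 => comm (cpow a n) (cpow a n)

/-- Prime elements: `p ≠ ⊤` and `[a,b] ≤ p` implies `a ≤ p` or `b ≤ p`. -/
def IsPrime (p : C) : Prop := p ≠ ⊤ ∧ ∀ a b : C, comm a b ≤ p → a ≤ p ∨ b ≤ p

/-- The radical `ρ(a) := ⨅ {p prime | a ≤ p}`. -/
def radical (a : C) : C := sInf {p : C | IsPrime p ∧ a ≤ p}

variable (C) in
/-- `C` is semiprime if `ρ(⊥) = ⊥`. -/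
def Semiprime : Prop := radical (⊥ : C) = ⊥

variable (C) in
/-- Condition (⋆): for all compact `a`, `b` and all `n ≥ 1` there is `m ≥ 0` with
`[[a,a]^m, [b,b]^m] ≤ [a,b]^n`.  Here `cpow (comm a b) n = [a,b]^(n+1)`, so `n : ℕ`
ranges exactly over the exponents `≥ 1` of the paper. -/
def Star : Prop := ∀ a b : C, IsCompactElement a → IsCompactElement b →
  ∀ n : ℕ, ∃ m : ℕ, comm (cpow a m) (cpow b m) ≤ cpow (comm a b) n

/-- Pure elements: `t ⊔ a⊥ = ⊤` for every compact `a ≤ t`. -/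
def IsPure (t : C) : Prop := ∀ a : C, IsCompactElement a → a ≤ t → t ⊔ ann a = ⊤

/-- w-pure elements: `t ⊔ (a → ρ(⊥)) = ⊤` for every compact `a ≤ t`. -/
def IsWPure (t : C) : Prop :=
  ∀ a : C, IsCompactElement a → a ≤ t → t ⊔ resid a (radical ⊥) = ⊤

/-- Complemented elements. -/
def IsComplEl (a : C) : Prop := ∃ b : C, a ⊔ b = ⊤ ∧ a ⊓ b = ⊥

/-- Regular elements: joins of sets of complemented elements. -/
def IsRegular (t : C) : Prop := ∃ S : Set C, (∀ a ∈ S, IsComplEl a) ∧ t = sSup S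

/-- Max-regular elements: maximal among regular elements distinct from `⊤`. -/
def IsMaxRegular (t : C) : Prop :=
  IsRegular t ∧ t ≠ ⊤ ∧ ∀ u : C, IsRegular u → u ≠ ⊤ → t ≤ u → u = t

/-- Maximal elements of `C \ {⊤}`. -/
def IsMaximal (p : C) : Prop := p ≠ ⊤ ∧ ∀ q : C, q ≠ ⊤ → p ≤ q → q = p

/-- Minimal primes. -/
def IsMinPrime (p : C) : Prop := IsPrime p ∧ ∀ q : C, IsPrime q → q ≤ p → q = p

variable (C) in
/-- `C` is mp if every prime lies above a unique minimal prime. -/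
def MP : Prop := ∀ p : C, IsPrime p → ∃! q : C, IsMinPrime q ∧ q ≤ p

variable (C) in
/-- `C` is PF if `a⊥` is pure for every compact `a`. -/
def PF : Prop := ∀ a : C, IsCompactElement a → IsPure (ann a)

variable (C) in
/-- `C` is PP if `a⊥` is complemented for every compact `a`. -/
def PP : Prop := ∀ a : C, IsCompactElement a → IsComplEl (ann a)

/-- `O(p) := ⨆ {a compact | a⊥ ≰ p}`. -/
def O (p : C) : C := sSup {a : C | IsCompactElement a ∧ ¬ ann a ≤ p}

variable (C) in
/-- `C` is normal. -/
def Normal : Prop := ∀ t u : C, t ⊔ u = ⊤ →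
  ∃ a b : C, t ⊔ a = ⊤ ∧ u ⊔ b = ⊤ ∧ comm a b = ⊥

variable (C) in
/-- `C` is B-normal. -/
def BNormal : Prop := ∀ t u : C, t ⊔ u = ⊤ →
  ∃ a b : C, IsComplEl a ∧ IsComplEl b ∧ t ⊔ a = ⊤ ∧ u ⊔ b = ⊤ ∧ comm a b = ⊥

variable (C) in
/-- `C` is purified. -/
def Purified : Prop := ∀ p q : C, IsMinPrime p → IsMinPrime q → p ≠ q →
  ∃ a : C, IsComplEl a ∧ a ≤ p ∧ ann a ≤ q

variable (C) in
/-- The prime spectrum of `C`. -/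
abbrev Spec := {p : C // IsPrime p}

variable (C) in
/-- The Zariski topology on `Spec C`: the closed sets are the `V(t) = {p | t ≤ p}`,
equivalently the topology generated by the sets `D(t) = {p | t ≰ p}`. -/
def zariskiTop : TopologicalSpace (Spec C) :=
  TopologicalSpace.generateFrom {U : Set (Spec C) | ∃ t : C, U = {p : Spec C | ¬ t ≤ p.1}}

variable (C) in
/-- The flat topology on `Spec C`: generated by the open basis `V(a)`, `a` compact. -/
def flatTop : TopologicalSpace (Spec C) :=
  TopologicalSpace.generateFrom
    {U : Set (Spec C) | ∃ a : C, IsCompactElement a ∧ U = {p : Spec C | a ≤ p.1}}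

lemma comm_sup_left (a b c : C) : comm (a ⊔ b) c = comm a c ⊔ comm b c := by
  rw [← sSup_pair, comm_sSup, iSup_pair]

lemma comm_mono_left {a b : C} (h : a ≤ b) (c : C) : comm a c ≤ comm b c := by
  rw [← sup_eq_right.mpr h, comm_sup_left]
  exact le_sup_left

lemma comm_mono {a b c d : C} (hab : a ≤ b) (hcd : c ≤ d) : comm a c ≤ comm b d := by
  refine (comm_mono_left hab c).trans ?_
  rw [comm_comm b, comm_comm b]
  exact comm_mono_left hcd b

lemma comm_le_left (a b : C) : comm a b ≤ a := (comm_le_inf a b).trans inf_le_left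

lemma comm_le_right (a b : C) : comm a b ≤ b := (comm_le_inf a b).trans inf_le_right

lemma comm_sup_sup_le (x b c : C) : comm (x ⊔ b) (x ⊔ c) ≤ x ⊔ comm b c := by
  rw [comm_sup_left, comm_comm b, comm_sup_left, comm_comm c]
  exact sup_le (le_sup_of_le_left (comm_le_left _ _)) (sup_le_sup_right (comm_le_left _ _) _)

lemma le_of_forall_isCompactElement_le {x y : C}
    (h : ∀ t, IsCompactElement t → t ≤ x → t ≤ y) : x ≤ y := by
  obtain ⟨s, hs, rfl⟩ := compactlyGenerated x
  exact sSup_le fun t ht => h t (hs t ht) (le_sSup ht)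

lemma cpow_isCompactElement {a : C} (ha : IsCompactElement a) (n : ℕ) :
    IsCompactElement (cpow a n) := by
  induction n with
  | zero => exact ha
  | succ n ih => exact comm_isCompact _ _ ih ih

lemma cpow_antitone (a : C) : Antitone (cpow a) :=
  antitone_nat_of_succ_le fun _ => comm_le_left _ _

lemma IsPrime.le_of_cpow_le {p a : C} (hp : IsPrime p) {n : ℕ} (h : cpow a n ≤ p) : a ≤ p := by
  induction n with
  | zero => exact h
  | succ n ih => exact (hp.2 _ _ h).elim ih ih

lemma IsPrime.le_of_not_ann_le {q : C} (hq : IsPrime q) {a : C} (h : ¬ ann a ≤ q) : a ≤ q := by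
  by_contra ha
  exact h <| sSup_le fun c hc => (hq.2 a c (hc.trans bot_le)).resolve_left ha

lemma le_ann_of_comm_eq_bot {a t : C} (h : comm a t = ⊥) : t ≤ ann a :=
  le_sSup h.le

lemma le_radical_iff {a x : C} : a ≤ radical x ↔ ∀ P, IsPrime P → x ≤ P → a ≤ P :=
  ⟨fun h _ hP hxP => h.trans (sInf_le ⟨hP, hxP⟩), fun h => le_sInf fun P hP => h P hP.1 hP.2⟩

theorem exists_isPrime_forall_not_le {M : Set C} (hMc : ∀ m ∈ M, IsCompactElement m)
    (hM : M.Nonempty) (hmul : ∀ x ∈ M, ∀ y ∈ M, ∃ z ∈ M, z ≤ comm x y) {x₀ : C}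
    (hx₀ : ∀ m ∈ M, ¬ m ≤ x₀) : ∃ P, IsPrime P ∧ x₀ ≤ P ∧ ∀ m ∈ M, ¬ m ≤ P := by
  obtain ⟨P, hx₀P, ⟨-, hPM⟩, hPmax⟩ :=
    zorn_le_nonempty₀ {y | x₀ ≤ y ∧ ∀ m ∈ M, ¬ m ≤ y} (fun c hcS hchain y hyc => by
      refine ⟨sSup c, ⟨(hcS hyc).1.trans (le_sSup hyc), fun m hm hle => ?_⟩,
        fun z hz => le_sSup hz⟩
      obtain ⟨z, hz, hmz⟩ := (isCompactElement_iff_le_of_directed_sSup_le C m).mp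
        (hMc m hm) c ⟨y, hyc⟩ hchain.directedOn hle
      exact (hcS hz).2 m hm hmz) x₀ ⟨le_rfl, hx₀⟩
  have hescape : ∀ b, ¬ b ≤ P → ∃ m ∈ M, m ≤ P ⊔ b := by
    intro b hb
    by_contra! h
    exact hb (le_sup_right.trans (hPmax ⟨hx₀P.trans le_sup_left, h⟩ le_sup_left))
  refine ⟨P, ⟨?_, fun b c hbc => ?_⟩, hx₀P, hPM⟩
  · rintro rfl
    obtain ⟨m, hm⟩ := hM
    exact hPM m hm le_top
  · by_contra! hP
    obtain ⟨mb, hmb, hmbP⟩ := hescape b hP.1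
    obtain ⟨mc, hmc, hmcP⟩ := hescape c hP.2
    obtain ⟨z, hz, hzle⟩ := hmul mb hmb mc hmc
    exact hPM z hz <| hzle.trans <|
      (comm_mono hmbP hmcP).trans <| (comm_sup_sup_le P b c).trans (sup_le le_rfl hbc)

theorem exists_cpow_le_of_le_radical {t x : C} (ht : IsCompactElement t)
    (h : t ≤ radical x) : ∃ n, cpow t n ≤ x := by
  by_contra! hx
  have hmul : ∀ u ∈ Set.range (cpow t), ∀ v ∈ Set.range (cpow t),
      ∃ z ∈ Set.range (cpow t), z ≤ comm u v := by
    rintro _ ⟨n, rfl⟩ _ ⟨k, rfl⟩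
    exact ⟨_, ⟨max n k + 1, rfl⟩,
      comm_mono (cpow_antitone t (le_max_left n k)) (cpow_antitone t (le_max_right n k))⟩
  obtain ⟨P, hP, hxP, htP⟩ := exists_isPrime_forall_not_le
    (Set.forall_mem_range.mpr (cpow_isCompactElement ht)) (Set.range_nonempty _) hmul
    (Set.forall_mem_range.mpr hx)
  exact htP t ⟨0, rfl⟩ (le_radical_iff.mp h P hP hxP)

/-- Reduces to `exists_isPrime_forall_not_le` applied to all iterated commutators of members
of `M`. -/
theorem exists_isPrime_forall_not_le_of_le_radical {M : Set C}
    (hMc : ∀ m ∈ M, IsCompactElement m) (hM : M.Nonempty)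
    (hmul : ∀ x ∈ M, ∀ y ∈ M, ∃ z ∈ M, z ≤ radical (comm x y)) {x₀ : C}
    (hx₀ : ∀ m ∈ M, ¬ m ≤ radical x₀) : ∃ P, IsPrime P ∧ x₀ ≤ P ∧ ∀ m ∈ M, ¬ m ≤ P := by
  set M' : Set C := {y | ∃ m ∈ M, ∃ n, cpow m n = y}
  have hmul' : ∀ x ∈ M', ∀ y ∈ M', ∃ z ∈ M', z ≤ comm x y := by
    rintro _ ⟨x, hx, n, rfl⟩ _ ⟨y, hy, k, rfl⟩
    obtain ⟨z, hz, hzle⟩ := hmul x hx y hy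
    have hz' : z ≤ radical (comm (cpow x n) (cpow y k)) := by
      refine le_radical_iff.mpr fun P hP hle => le_radical_iff.mp hzle P hP ?_
      rcases hP.2 _ _ hle with h | h
      · exact (comm_le_left x y).trans (hP.le_of_cpow_le h)
      · exact (comm_le_right x y).trans (hP.le_of_cpow_le h)
    obtain ⟨j, hj⟩ := exists_cpow_le_of_le_radical (hMc z hz) hz'
    exact ⟨_, ⟨z, hz, j, rfl⟩, hj⟩
  obtain ⟨m, hm⟩ := hM
  obtain ⟨P, hP, hx₀P, hPM'⟩ := exists_isPrime_forall_not_le (M := M')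
    (by rintro _ ⟨m, hm, n, rfl⟩; exact cpow_isCompactElement (hMc m hm) n)
    ⟨m, m, hm, 0, rfl⟩ hmul'
    (by
      rintro _ ⟨m, hm, n, rfl⟩ hle
      exact hx₀ m hm (le_radical_iff.mpr fun P hP hx₀P => hP.le_of_cpow_le (hle.trans hx₀P)))
  exact ⟨P, hP, hx₀P, fun m hm => hPM' _ ⟨m, hm, 0, rfl⟩⟩

theorem exists_isPrime_le_not_le_of_ann_le (hC : Semiprime C) {p a : C} (hp : IsPrime p)
    (ha : IsCompactElement a) (hann : ann a ≤ p) : ∃ q, IsPrime q ∧ q ≤ p ∧ ¬ a ≤ q := by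
  set M : Set C := {y | ∃ t, IsCompactElement t ∧ ¬ t ≤ p ∧ comm a t = y}
  have htop : ¬ (⊤ : C) ≤ p := fun h => hp.1 (top_le_iff.mp h)
  have hmul : ∀ x ∈ M, ∀ y ∈ M, ∃ z ∈ M, z ≤ radical (comm x y) := by
    rintro _ ⟨t₁, ht₁, ht₁p, rfl⟩ _ ⟨t₂, ht₂, ht₂p, rfl⟩
    refine ⟨comm a (comm t₁ t₂), ⟨_, comm_isCompact _ _ ht₁ ht₂,
      fun h => (hp.2 _ _ h).elim ht₁p ht₂p, rfl⟩, le_radical_iff.mpr fun P hP hle => ?_⟩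
    have hbelow : a ≤ P ∨ t₁ ≤ P ∨ t₂ ≤ P := by
      rcases hP.2 _ _ hle with h | h <;> rcases hP.2 _ _ h with h | h <;> simp [h]
    rcases hbelow with h | h | h
    · exact (comm_le_left _ _).trans h
    · exact (comm_le_right _ _).trans ((comm_le_left _ _).trans h)
    · exact (comm_le_right _ _).trans ((comm_le_right _ _).trans h)
  obtain ⟨q, hq, -, hqM⟩ := exists_isPrime_forall_not_le_of_le_radical (M := M)
    (by rintro _ ⟨t, ht, -, rfl⟩; exact comm_isCompact _ _ ha ht) ⟨a, ⊤, top_isCompact, htop,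
      comm_top a⟩ hmul
    (by
      rintro _ ⟨t, ht, htp, rfl⟩ hle
      rw [hC, le_bot_iff] at hle
      exact htp ((le_ann_of_comm_eq_bot hle).trans hann))
  refine ⟨q, hq, le_of_forall_isCompactElement_le fun t ht htq => ?_, fun h => ?_⟩
  · by_contra htp
    exact hqM _ ⟨t, ht, htp, rfl⟩ ((comm_le_right a t).trans htq)
  · exact hqM _ ⟨⊤, top_isCompact, htop, rfl⟩ ((comm_le_left a ⊤).trans h)

theorem statement4 (h : Semiprime C) (p : C) (hp : IsPrime p) :
    O p = sInf {q : C | IsPrime q ∧ q ≤ p} := by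
  refine le_antisymm ?_ ?_
  · exact sSup_le fun a ⟨_, ha⟩ => le_sInf fun q ⟨hq, hqp⟩ =>
      hq.le_of_not_ann_le fun h => ha (h.trans hqp)
  · refine le_of_forall_isCompactElement_le fun a ha hle => le_sSup ⟨ha, fun hann => ?_⟩
    obtain ⟨q, hq, hqp, haq⟩ := exists_isPrime_le_not_le_of_ann_le h hp ha hann
    exact haq (hle.trans (sInf_le ⟨hq, hqp⟩))

end CommutatorLattice
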